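/- arXiv:2004.02190 — 2 statements merged into one kernel-verified Lean document; each statement's English description precedes it below -/
import Mathlib

section
/- Let p be a prime, n ≥ 1, and let g ∈ GL_n(ZMod p) have order p^n − 1. Then the normalizer in GL_n(ZMod p) of the cyclic subgroup ⟨g⟩ has cardinality n · (p^n − 1); equivalently, the quotient of the normalizer of ⟨g⟩ by ⟨g⟩ is a cyclic group of order n. -/
/-!
The subalgebra `K = 𝔽_q[g]` of matrices contains `0` and the `q ^ n - 1` distinct powers of `g`,
and by Cayley–Hamilton it has at most `q ^ n` elements. Hence `K = {0} ∪ ⟨g⟩` is a field with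
`q ^ n` elements, and for `v ≠ 0` the map `c ↦ c v` identifies `K` with `𝔽_q ^ n`. Under this
identification a matrix commuting with `K` is multiplication by an element of `K`, and every
automorphism of `K` over `𝔽_q` is conjugation by the matrix it induces on `𝔽_q ^ n`. So conjugation
maps the normalizer of `⟨g⟩` onto `Gal(K/𝔽_q)` with kernel `K ∩ GL = ⟨g⟩`, and the Galois group of
a degree `n` extension of finite fields is cyclic of order `n`.
-/

open Matrix
open scoped MatrixGroups Algebra

namespace Subalgebra

variable {R A : Type*} [CommSemiring R] [Semiring A] [Algebra R A] (S : Subalgebra R A)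

def conjStabilizer : Subgroup Aˣ where
  carrier := {u | ∀ x, x ∈ S ↔ (u : A) * x * ↑u⁻¹ ∈ S}
  one_mem' := by simp
  mul_mem' {u v} hu hv x := by
    rw [hv x, hu]
    simp [mul_assoc]
  inv_mem' {u} hu x := by
    rw [inv_inv, hu (↑u⁻¹ * x * ↑u)]
    simp [mul_assoc]

def conjAut : S.conjStabilizer →* (S ≃ₐ[R] S) where
  toFun u :=
    { toFun x := ⟨(u : Aˣ) * x * ↑(u : Aˣ)⁻¹, (u.2 x).1 x.2⟩
      invFun x := ⟨↑(u : Aˣ)⁻¹ * x * (u : Aˣ), by simpa using (S.conjStabilizer.inv_mem u.2 x).1 x.2⟩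
      left_inv x := by ext; simp [mul_assoc]
      right_inv x := by ext; simp [mul_assoc]
      map_mul' x y := by ext; simp [mul_assoc]
      map_add' x y := by ext; simp [mul_add, add_mul]
      commutes' r := by ext; simp [← Algebra.commutes, mul_assoc] }
  map_one' := by ext; simp
  map_mul' u v := by ext; simp [mul_assoc]

variable {S}

@[simp]
theorem coe_conjAut_apply (u : S.conjStabilizer) (x : S) :
    (S.conjAut u x : A) = (u : Aˣ) * x * ↑(u : Aˣ)⁻¹ := rfl

theorem conjAut_eq_one_iff (u : S.conjStabilizer) :
    S.conjAut u = 1 ↔ ∀ x ∈ S, Commute ((u : Aˣ) : A) x := by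
  simp only [AlgEquiv.ext_iff, Subtype.ext_iff, coe_conjAut_apply, AlgEquiv.one_apply,
    Units.mul_inv_eq_iff_eq_mul, Subtype.forall]
  rfl

end Subalgebra

theorem Algebra.commute_of_mem_adjoin_singleton {R A : Type*} [CommSemiring R] [Semiring A]
    [Algebra R A] {x a b : A} (ha : a ∈ R[x]) (hb : b ∈ R[x]) : Commute a b :=
  commute_of_mem_adjoin_singleton_of_commute hb (commute_of_mem_adjoin_self ha).symm

theorem Units.ncard_insert_zero_image_val {M₀ : Type*} [MonoidWithZero M₀] [Nontrivial M₀]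
    [Finite M₀] (H : Subgroup M₀ˣ) :
    (insert 0 (Units.val '' (H : Set M₀ˣ))).ncard = Nat.card H + 1 := by
  rw [Set.ncard_insert_of_notMem (by simp), Set.ncard_image_of_injective _ Units.val_injective,
    ← Nat.card_coe_set_eq, SetLike.coe_sort_coe]

section MatrixSubalgebra

variable {F ι : Type*} [CommRing F] [Fintype ι] [DecidableEq ι]

theorem Matrix.exists_mulVec_eq_linearEquiv (f : (ι → F) ≃ₗ[F] (ι → F)) :
    ∃ u : GL ι F, ∀ w, (u : Matrix ι ι F) *ᵥ w = f w :=
  ⟨Units.map LinearMap.toMatrixAlgEquiv'.toMonoidHom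
      ((LinearMap.GeneralLinearGroup.generalLinearEquiv F _).symm f),
    LinearMap.toMatrix'_mulVec (f : (ι → F) →ₗ[F] (ι → F))⟩

namespace Subalgebra

variable (K : Subalgebra F (Matrix ι ι F)) (v : ι → F)

def mulVecRight : K →ₗ[F] (ι → F) where
  toFun c := (c : Matrix ι ι F) *ᵥ v
  map_add' c d := by simp [add_mulVec]
  map_smul' a c := by simp [smul_mulVec]

variable {K v}

@[simp]
theorem mulVecRight_apply (c : K) : K.mulVecRight v c = (c : Matrix ι ι F) *ᵥ v := rfl

theorem mulVecRight_mul (c d : K) :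
    K.mulVecRight v (c * d) = (c : Matrix ι ι F) *ᵥ K.mulVecRight v d := by
  simp [mulVec_mulVec]

theorem mem_of_commute_of_bijective_mulVecRight (hK : ∀ a ∈ K, ∀ b ∈ K, Commute a b)
    (hv : Function.Bijective (K.mulVecRight v)) {x : Matrix ι ι F} (hx : ∀ c ∈ K, Commute x c) :
    x ∈ K := by
  obtain ⟨c, hc⟩ := hv.2 (x *ᵥ v)
  suffices x = c from this ▸ c.2
  refine ext_iff_mulVec.2 fun w ↦ ?_
  obtain ⟨d, rfl⟩ := hv.2 w
  rw [mulVecRight_apply] at hc ⊢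
  rw [mulVec_mulVec, (hx d d.2).eq, ← mulVec_mulVec, ← hc, mulVec_mulVec, mulVec_mulVec,
    (hK c c.2 d d.2).eq]

theorem conjAut_surjective_of_bijective_mulVecRight (hv : Function.Bijective (K.mulVecRight v)) :
    Function.Surjective K.conjAut := by
  intro σ
  let e := LinearEquiv.ofBijective _ hv
  obtain ⟨u, hu⟩ := exists_mulVec_eq_linearEquiv (e.symm ≪≫ₗ σ.toLinearEquiv ≪≫ₗ e)
  have hconj (c : K) : (u : Matrix ι ι F) * c = σ c * u := by
    refine ext_iff_mulVec.2 fun w ↦ ?_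
    obtain ⟨d, rfl⟩ := e.surjective w
    have he (c d : K) : (c : Matrix ι ι F) *ᵥ e d = e (c * d) := (mulVecRight_mul c d).symm
    rw [← mulVec_mulVec, ← mulVec_mulVec, he, hu, hu]
    simp [he]
  have hσ (c : K) : (u : Matrix ι ι F) * c * ((u⁻¹ : GL ι F) : Matrix ι ι F) = σ c := by
    rw [hconj, Units.mul_inv_cancel_right]
  have hu : u ∈ K.conjStabilizer := by
    refine fun x ↦ ⟨fun hx ↦ hσ ⟨x, hx⟩ ▸ (σ _).2, fun hx ↦ ?_⟩
    have h := hσ (σ.symm ⟨_, hx⟩)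
    rw [σ.apply_symm_apply, Units.mul_left_inj, Units.mul_right_inj] at h
    exact h ▸ (σ.symm _).2
  exact ⟨⟨u, hu⟩, AlgEquiv.ext fun c ↦ Subtype.ext (hσ c)⟩

end Subalgebra

theorem Matrix.card_adjoin_le [Nontrivial F] [Fintype F] (A : Matrix ι ι F) :
    Nat.card F[A] ≤ Fintype.card F ^ Fintype.card ι := by
  let e := Polynomial.degreeLTEquiv F (Fintype.card ι)
  have hsub : (F[A] : Set (Matrix ι ι F)) ⊆
      Set.range fun c ↦ Polynomial.aeval A (e.symm c : Polynomial F) := by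
    rw [Algebra.adjoin_singleton_eq_range_aeval]
    rintro _ ⟨q, rfl⟩
    have hq : q %ₘ A.charpoly ∈ Polynomial.degreeLT F (Fintype.card ι) := by
      simpa [Polynomial.mem_degreeLT, charpoly_degree_eq_dim] using
        Polynomial.degree_modByMonic_lt q A.charpoly_monic
    exact ⟨e ⟨_, hq⟩, by simp [aeval_eq_aeval_mod_charpoly A q]⟩
  calc Nat.card F[A] ≤ Nat.card (Set.range _) := Nat.card_mono (Set.finite_range _) hsub
    _ ≤ Nat.card (Fin (Fintype.card ι) → F) := Finite.card_range_le _
    _ = _ := by simp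

end MatrixSubalgebra

namespace Matrix.GeneralLinearGroup

open Subgroup

variable {F ι : Type*} [Field F] [Fintype F] [Fintype ι] [DecidableEq ι]

def IsSingerCycle (g : GL ι F) : Prop :=
  orderOf g = Fintype.card F ^ Fintype.card ι - 1

namespace IsSingerCycle

variable {g : GL ι F}

theorem nonempty (hg : IsSingerCycle g) : Nonempty ι := by
  by_contra h
  have : IsEmpty ι := not_nonempty_iff.1 h
  have h1 : orderOf g = 1 := orderOf_eq_one_iff.2 (Subsingleton.elim _ _)
  simp [IsSingerCycle, h1] at hg

theorem coe_adjoin_eq (hg : IsSingerCycle g) :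
    (F[(g : Matrix ι ι F)] : Set (Matrix ι ι F)) =
      insert 0 (Units.val '' (zpowers g : Set (GL ι F))) := by
  have := hg.nonempty
  have hsub : insert 0 (Units.val '' (zpowers g : Set (GL ι F))) ⊆ F[(g : Matrix ι ι F)] := by
    rintro _ (rfl | ⟨u, hu, rfl⟩)
    · exact zero_mem _
    · obtain ⟨k, rfl⟩ := mem_powers_iff_mem_zpowers.2 hu
      exact Subalgebra.pow_mem _ (Algebra.self_mem_adjoin_singleton F _) k
  refine (Set.eq_of_subset_of_ncard_le hsub ?_ (Set.toFinite _)).symm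
  rw [Units.ncard_insert_zero_image_val, Nat.card_zpowers, hg,
    Nat.sub_add_cancel (Nat.one_le_pow _ _ Fintype.card_pos), ← Nat.card_coe_set_eq,
    SetLike.coe_sort_coe]
  exact card_adjoin_le _

theorem mem_adjoin_iff (hg : IsSingerCycle g) {x : Matrix ι ι F} :
    x ∈ F[(g : Matrix ι ι F)] ↔ x = 0 ∨ ∃ u ∈ zpowers g, (u : Matrix ι ι F) = x := by
  rw [← SetLike.mem_coe, hg.coe_adjoin_eq]
  rfl

theorem card_adjoin (hg : IsSingerCycle g) :
    Nat.card F[(g : Matrix ι ι F)] = Fintype.card F ^ Fintype.card ι := by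
  have := hg.nonempty
  rw [← SetLike.coe_sort_coe, Nat.card_coe_set_eq, hg.coe_adjoin_eq,
    Units.ncard_insert_zero_image_val, Nat.card_zpowers, hg,
    Nat.sub_add_cancel (Nat.one_le_pow _ _ Fintype.card_pos)]

theorem val_mem_adjoin_iff (hg : IsSingerCycle g) (u : GL ι F) :
    (u : Matrix ι ι F) ∈ F[(g : Matrix ι ι F)] ↔ u ∈ zpowers g := by
  have := hg.nonempty
  simp [hg.mem_adjoin_iff, Units.val_injective.eq_iff]

theorem eq_zero_or_isUnit_of_mem_adjoin (hg : IsSingerCycle g) {x : Matrix ι ι F}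
    (hx : x ∈ F[(g : Matrix ι ι F)]) : x = 0 ∨ IsUnit x := by
  obtain h | ⟨u, -, rfl⟩ := hg.mem_adjoin_iff.1 hx
  exacts [.inl h, .inr u.isUnit]

theorem isField_adjoin (hg : IsSingerCycle g) : IsField F[(g : Matrix ι ι F)] := by
  have := hg.nonempty
  have : NoZeroDivisors F[(g : Matrix ι ι F)] := ⟨fun {a b} hab ↦ by
    refine (hg.eq_zero_or_isUnit_of_mem_adjoin a.2).imp Subtype.ext fun ha ↦ Subtype.ext ?_
    simpa [ha.mul_right_eq_zero] using congrArg Subtype.val hab⟩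
  have : IsDomain F[(g : Matrix ι ι F)] := NoZeroDivisors.to_isDomain _
  exact Finite.isDomain_to_isField _

theorem card_algEquiv_adjoin (hg : IsSingerCycle g) :
    Nat.card (F[(g : Matrix ι ι F)] ≃ₐ[F] F[(g : Matrix ι ι F)]) = Fintype.card ι := by
  let := hg.isField_adjoin.toField
  let := Fintype.ofFinite F[(g : Matrix ι ι F)]
  rw [IsGalois.card_aut_eq_finrank]
  apply Nat.pow_right_injective (Fintype.one_lt_card (α := F))
  dsimp only
  rw [← Module.card_eq_pow_finrank, ← Nat.card_eq_fintype_card, hg.card_adjoin]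

theorem isCyclic_algEquiv_adjoin (hg : IsSingerCycle g) :
    IsCyclic (F[(g : Matrix ι ι F)] ≃ₐ[F] F[(g : Matrix ι ι F)]) := by
  let := hg.isField_adjoin.toField
  infer_instance

theorem bijective_mulVecRight (hg : IsSingerCycle g) {v : ι → F} (hv : v ≠ 0) :
    Function.Bijective (F[(g : Matrix ι ι F)].mulVecRight v) := by
  refine Function.Injective.bijective_of_nat_card_le ?_ ?_
  · refine (injective_iff_map_eq_zero _).2 fun c hc ↦ ?_
    refine Subtype.ext ((hg.eq_zero_or_isUnit_of_mem_adjoin c.2).resolve_right fun hu ↦ hv ?_)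
    exact mulVec_injective_of_isUnit hu (by simpa using hc)
  · simp [hg.card_adjoin]

theorem normalizer_eq (hg : IsSingerCycle g) :
    normalizer (zpowers g : Set (GL ι F)) = F[(g : Matrix ι ι F)].conjStabilizer := by
  have := hg.nonempty
  ext x
  rw [mem_normalizer_iff]
  constructor
  · intro hx y
    simp only [hg.mem_adjoin_iff, Units.mul_right_eq_zero, Units.mul_left_eq_zero]
    refine or_congr_right ⟨?_, ?_⟩
    · rintro ⟨u, hu, rfl⟩
      exact ⟨x * u * x⁻¹, (hx u).1 hu, by simp⟩
    · rintro ⟨w, hw, hwy⟩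
      refine ⟨x⁻¹ * w * x, (mem_normalizer_iff''.1 hx w).1 hw, ?_⟩
      simp [hwy, mul_assoc]
  · intro hx h
    rw [← hg.val_mem_adjoin_iff, hx, ← hg.val_mem_adjoin_iff]
    simp

noncomputable def normalizerToAlgEquiv (hg : IsSingerCycle g) :
    normalizer (zpowers g : Set (GL ι F)) →* (F[(g : Matrix ι ι F)] ≃ₐ[F] F[(g : Matrix ι ι F)]) :=
  F[(g : Matrix ι ι F)].conjAut.comp (inclusion hg.normalizer_eq.le)

theorem ker_normalizerToAlgEquiv (hg : IsSingerCycle g) :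
    hg.normalizerToAlgEquiv.ker =
      (zpowers g).subgroupOf (normalizer (zpowers g : Set (GL ι F))) := by
  have := hg.nonempty
  ext u
  rw [MonoidHom.mem_ker, normalizerToAlgEquiv, MonoidHom.comp_apply,
    Subalgebra.conjAut_eq_one_iff, mem_subgroupOf, coe_inclusion, ← hg.val_mem_adjoin_iff]
  refine ⟨fun hu ↦ ?_, fun hu c hc ↦ Algebra.commute_of_mem_adjoin_singleton hu hc⟩
  obtain ⟨v, hv⟩ := exists_ne (0 : ι → F)
  exact Subalgebra.mem_of_commute_of_bijective_mulVecRight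
    (fun a ha b hb ↦ Algebra.commute_of_mem_adjoin_singleton ha hb) (hg.bijective_mulVecRight hv) hu

theorem normalizerToAlgEquiv_surjective (hg : IsSingerCycle g) :
    Function.Surjective hg.normalizerToAlgEquiv := by
  have := hg.nonempty
  intro σ
  obtain ⟨v, hv⟩ := exists_ne (0 : ι → F)
  obtain ⟨u, rfl⟩ := Subalgebra.conjAut_surjective_of_bijective_mulVecRight
    (hg.bijective_mulVecRight hv) σ
  exact ⟨⟨u, hg.normalizer_eq.ge u.2⟩, rfl⟩

noncomputable def quotientNormalizerEquiv (hg : IsSingerCycle g) :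
    normalizer (zpowers g : Set (GL ι F)) ⧸
        (zpowers g).subgroupOf (normalizer (zpowers g : Set (GL ι F))) ≃*
      (F[(g : Matrix ι ι F)] ≃ₐ[F] F[(g : Matrix ι ι F)]) :=
  (QuotientGroup.quotientMulEquivOfEq hg.ker_normalizerToAlgEquiv.symm).trans
    (QuotientGroup.quotientKerEquivOfSurjective _ hg.normalizerToAlgEquiv_surjective)

end IsSingerCycle

end Matrix.GeneralLinearGroup

theorem singer_cycle_normalizer_general (p n : ℕ) (hp : p.Prime)
    (g : GL (Fin n) (ZMod p)) (hg : orderOf g = p ^ n - 1) :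
    Nat.card (Subgroup.normalizer (Subgroup.zpowers g : Set (GL (Fin n) (ZMod p)))) = n * (p ^ n - 1) ∧
    IsCyclic ((Subgroup.normalizer (Subgroup.zpowers g : Set (GL (Fin n) (ZMod p)))) ⧸
      (Subgroup.zpowers g).subgroupOf (Subgroup.normalizer (Subgroup.zpowers g : Set (GL (Fin n) (ZMod p))))) ∧
    Nat.card ((Subgroup.normalizer (Subgroup.zpowers g : Set (GL (Fin n) (ZMod p)))) ⧸
      (Subgroup.zpowers g).subgroupOf (Subgroup.normalizer (Subgroup.zpowers g : Set (GL (Fin n) (ZMod p))))) = n := by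
  have := Fact.mk hp
  have hsinger : GeneralLinearGroup.IsSingerCycle g := by
    simpa [GeneralLinearGroup.IsSingerCycle] using hg
  let e := hsinger.quotientNormalizerEquiv
  have := hsinger.isCyclic_algEquiv_adjoin
  have hquot := Nat.card_congr e.toEquiv
  rw [hsinger.card_algEquiv_adjoin, Fintype.card_fin] at hquot
  refine ⟨?_, isCyclic_of_surjective e.symm.toMonoidHom e.symm.surjective, hquot⟩
  rw [Subgroup.card_eq_card_quotient_mul_card_subgroup ((Subgroup.zpowers g).subgroupOf _), hquot,
    Nat.card_congr (Subgroup.subgroupOfEquivOfLe Subgroup.le_normalizer).toEquiv,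
    Nat.card_zpowers, hg]

/-- The normalizer in `GL n (ZMod p)` of the subgroup generated by a Singer cycle `g`
has cardinality `n * (p ^ n - 1)`; equivalently, the quotient of this normalizer by
`⟨g⟩` is a cyclic group of order `n`. -/
theorem singer_cycle_normalizer (p n : ℕ) (hp : p.Prime) (hn : 1 ≤ n)
    (g : GL (Fin n) (ZMod p)) (hg : orderOf g = p ^ n - 1) :
    Nat.card (Subgroup.normalizer (Subgroup.zpowers g : Set (GL (Fin n) (ZMod p)))) = n * (p ^ n - 1) ∧
    IsCyclic ((Subgroup.normalizer (Subgroup.zpowers g : Set (GL (Fin n) (ZMod p)))) ⧸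
      (Subgroup.zpowers g).subgroupOf (Subgroup.normalizer (Subgroup.zpowers g : Set (GL (Fin n) (ZMod p))))) ∧
    Nat.card ((Subgroup.normalizer (Subgroup.zpowers g : Set (GL (Fin n) (ZMod p)))) ⧸
      (Subgroup.zpowers g).subgroupOf (Subgroup.normalizer (Subgroup.zpowers g : Set (GL (Fin n) (ZMod p))))) = n :=
  singer_cycle_normalizer_general p n hp g hg
end

section
/- Let p be a prime and n, m ≥ 1. The kernel of the reduction-mod-p homomorphism GL_n(ZMod p^m) → GL_n(ZMod p) is a p-group; consequently GL_n(ZMod p^m)/O_p(GL_n(ZMod p^m)) ≅ GL_n(ZMod p), where O_p denotes the largest normal p-subgroup. -/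
open Matrix
open scoped MatrixGroups

/-- The `p`-core `O_p(G)`: the largest normal `p`-subgroup of `G`, here realized as the
join of all normal `p`-subgroups. -/
def pCore (p : ℕ) (G : Type*) [Group G] : Subgroup G :=
  sSup {H : Subgroup G | H.Normal ∧ IsPGroup p H}

/-!
An element `A` of the kernel of reduction is `1 + p C`, and `(1 + p C) ^ (p ^ (m - 1)) = 1`
because `p ^ m = 0`; so the kernel is a `p`-group. Reduction is surjective, as any lift of an
invertible matrix has a determinant that is a unit modulo the nilpotent ideal `(p)`. The quotient
`GL_n(𝔽_p)` has no nontrivial normal `p`-subgroup `N`: the vectors fixed by `N` form a nonzero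
(`p`-group acting on a `p`-group) subset stable under all of `GL_n(𝔽_p)` (as `N` is normal), hence
everything, since `GL_n(𝔽_p)` is transitive on nonzero vectors. So `O_p` is exactly the kernel.
-/

open Polynomial in
theorem one_add_natCast_mul_pow_pow_eq_one {R : Type*} [Ring R] {p k : ℕ}
    (hp : (p : R) ^ (k + 1) = 0) (c : R) : (1 + p * c) ^ p ^ k = 1 := by
  obtain ⟨q, hq⟩ : (p : ℤ[X]) ^ (k + 1) ∣ (1 + (p : ℤ[X]) * X) ^ p ^ k - 1 ^ p ^ k :=
    dvd_sub_pow_of_dvd_sub (by simp) k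
  simpa [hp, sub_eq_zero] using congrArg (aeval c) hq

namespace ZMod

theorem exists_eq_natCast_mul_of_castHom_eq_zero {m n : ℕ} (h : m ∣ n) {x : ZMod n}
    (hx : castHom h (ZMod m) x = 0) : ∃ y, x = m * y := by
  obtain ⟨a, rfl⟩ := intCast_surjective x
  rw [map_intCast, intCast_zmod_eq_zero_iff_dvd] at hx
  obtain ⟨b, rfl⟩ := hx
  exact ⟨b, by push_cast; rfl⟩

theorem natCast_pow_self_eq_zero (p k : ℕ) : (p : ZMod (p ^ k)) ^ k = 0 := by
  rw [← Nat.cast_pow, natCast_self]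

theorem isLocalHom_castHom_pow (p : ℕ) {m : ℕ} (hm : m ≠ 0) :
    IsLocalHom (castHom (dvd_pow_self p hm) (ZMod p)) := by
  refine ⟨fun x hx => ?_⟩
  set f := castHom (dvd_pow_self p hm) (ZMod p)
  obtain ⟨y, hy⟩ := ringHom_surjective f ↑hx.unit⁻¹
  obtain ⟨z, hz⟩ : ∃ z, x * y - 1 = p * z :=
    exists_eq_natCast_mul_of_castHom_eq_zero _ <| by
      rw [map_sub, map_mul, hy, IsUnit.mul_val_inv, map_one, sub_self]
  have hnil : IsNilpotent (x * y - 1) :=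
    hz ▸ ⟨m, by rw [mul_pow, natCast_pow_self_eq_zero, zero_mul]⟩
  have hxy : IsUnit (x * y) := by simpa using hnil.isUnit_one_add
  exact isUnit_of_mul_isUnit_left hxy

end ZMod

theorem LinearEquiv.exists_apply_eq_of_ne_zero {K V : Type*} [Field K] [AddCommGroup V]
    [Module K V] {v w : V} (hv : v ≠ 0) (hw : w ≠ 0) : ∃ g : V ≃ₗ[K] V, g v = w := by
  let f := (toSpanNonzeroSingleton K V v hv).symm ≪≫ₗ toSpanNonzeroSingleton K V w hw
  obtain ⟨g, hg⟩ := Submodule.exists_linearEquiv_restrict_eq f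
  have hv1 : (toSpanNonzeroSingleton K V v hv).symm ⟨v, Submodule.mem_span_singleton_self v⟩ = 1 :=
    (LinearEquiv.symm_apply_eq _).mpr (toSpanNonzeroSingleton_one K V v hv).symm
  refine ⟨g, ?_⟩
  simpa [f, hv1] using (hg ⟨v, Submodule.mem_span_singleton_self v⟩).symm

open MulAction in
theorem IsPGroup.exists_ne_zero_mem_fixedPoints {p : ℕ} [Fact p.Prime] {G K V : Type*} [Group G]
    [Field K] [CharP K p] [AddCommGroup V] [Module K V] [Finite V] [Nontrivial V]
    [DistribMulAction G V] (hG : IsPGroup p G) : ∃ v ∈ fixedPoints G V, v ≠ 0 := by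
  obtain ⟨w, hw⟩ := exists_ne (0 : V)
  have hpw : addOrderOf w = p := addOrderOf_eq_prime (by
    rw [← Nat.cast_smul_eq_nsmul K, CharP.cast_eq_zero, zero_smul]) hw
  obtain ⟨v, hv, h0v⟩ := hG.exists_fixed_point_of_prime_dvd_card_of_fixed_point V
    (hpw ▸ addOrderOf_dvd_natCard w) (a := 0) (fun g => smul_zero g)
  exact ⟨v, hv, h0v.symm⟩

open MulAction in
theorem LinearMap.GeneralLinearGroup.eq_bot_of_normal_of_isPGroup {p : ℕ} [Fact p.Prime]
    {K V : Type*} [Field K] [CharP K p] [AddCommGroup V] [Module K V] [Finite V]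
    (N : Subgroup (GeneralLinearGroup K V)) [N.Normal] (hN : IsPGroup p N) : N = ⊥ := by
  have hfix : ∀ w : V, w ∈ fixedPoints N V := by
    intro w
    rcases eq_or_ne w 0 with rfl | hw
    · exact fun g => smul_zero g
    have : Nontrivial V := ⟨⟨w, 0, hw⟩⟩
    obtain ⟨v, hv, hv0⟩ := hN.exists_ne_zero_mem_fixedPoints (K := K) (V := V)
    obtain ⟨g, rfl⟩ := LinearEquiv.exists_apply_eq_of_ne_zero (K := K) hv0 hw
    exact smul_mem_fixedPoints_of_normal (GeneralLinearGroup.ofLinearEquiv g) hv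
  refine (Subgroup.eq_bot_iff_forall N).mpr fun g hg => ?_
  ext v
  exact hfix v ⟨g, hg⟩

namespace Matrix.GeneralLinearGroup

variable {ι : Type*} [Fintype ι] [DecidableEq ι]

theorem eq_bot_of_normal_of_isPGroup {p : ℕ} [Fact p.Prime] {K : Type*} [Field K] [Finite K]
    [CharP K p] (N : Subgroup (GL ι K)) [N.Normal] (hN : IsPGroup p N) : N = ⊥ := by
  have : (N.map toLin.toMonoidHom).Normal := Subgroup.Normal.map inferInstance _ toLin.surjective
  refine (N.map_eq_bot_iff_of_injective (f := toLin.toMonoidHom) toLin.injective).mp ?_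
  exact LinearMap.GeneralLinearGroup.eq_bot_of_normal_of_isPGroup _ (hN.map _)

theorem map_surjective {R S : Type*} [CommRing R] [CommRing S] (f : R →+* S) [IsLocalHom f]
    (hf : Function.Surjective f) : Function.Surjective (map f : GL ι R →* GL ι S) := by
  intro B
  obtain ⟨A, hA⟩ : ∃ A : Matrix ι ι R, A.map f = B :=
    ⟨(B : Matrix ι ι S).map (Function.surjInv hf), by
      rw [Matrix.map_map, Function.comp_def]; simp [Function.surjInv_eq hf]⟩
  have hdet : IsUnit A.det := by
    refine IsUnit.of_map f _ ?_
    rw [RingHom.map_det, RingHom.mapMatrix_apply, hA]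
    exact B.isUnit.map detMonoidHom
  exact ⟨mk'' A hdet, Units.ext hA⟩

theorem pow_eq_one_of_mem_ker_map_castHom {p k : ℕ} {A : GL ι (ZMod (p ^ (k + 1)))}
    (hA : A ∈ (map (ZMod.castHom (dvd_pow_self p k.add_one_ne_zero) (ZMod p)) :
      GL ι (ZMod (p ^ (k + 1))) →* GL ι (ZMod p)).ker) :
    A ^ p ^ k = 1 := by
  set f := ZMod.castHom (dvd_pow_self p k.add_one_ne_zero) (ZMod p)
  have hA1 : (A : Matrix ι ι (ZMod (p ^ (k + 1)))).map f = 1 := congrArg Units.val hA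
  have hA0 : ((A : Matrix ι ι (ZMod (p ^ (k + 1)))) - 1).map f = 0 := by
    rw [Matrix.map_sub _ (map_sub f), hA1, Matrix.map_one f (map_zero f) (map_one f), sub_self]
  choose C hC using fun i j =>
    ZMod.exists_eq_natCast_mul_of_castHom_eq_zero (dvd_pow_self p k.add_one_ne_zero)
      (congrFun₂ hA0 i j)
  have hAC : (A : Matrix ι ι (ZMod (p ^ (k + 1)))) = 1 + p * Matrix.of C := by
    rw [← sub_eq_iff_eq_add', ← nsmul_eq_mul]
    ext i j
    simp [hC]
  have hp : (p : Matrix ι ι (ZMod (p ^ (k + 1)))) ^ (k + 1) = 0 := by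
    rw [← map_natCast (Matrix.scalar ι), ← map_pow, ZMod.natCast_pow_self_eq_zero, map_zero]
  ext1
  rw [Units.val_pow_eq_pow_val, hAC, Units.val_one]
  exact one_add_natCast_mul_pow_pow_eq_one hp _

end Matrix.GeneralLinearGroup

theorem pCore_eq_ker {p : ℕ} {G Q : Type*} [Group G] [Group Q] (f : G →* Q)
    (hf : Function.Surjective f) (hker : IsPGroup p f.ker)
    (hQ : ∀ N : Subgroup Q, N.Normal → IsPGroup p N → N = ⊥) : pCore p G = f.ker :=
  le_antisymm
    (sSup_le fun H ⟨hHn, hHp⟩ => (H.map_eq_bot_iff).mp (hQ _ (hHn.map f hf) (hHp.map f)))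
    (le_sSup ⟨f.normal_ker, hker⟩)

/-- The kernel of the reduction-mod-`p` homomorphism `GL n (ZMod (p ^ m)) → GL n (ZMod p)`
is a `p`-group; consequently `GL n (ZMod (p ^ m)) / O_p(GL n (ZMod (p ^ m)))` is isomorphic
to `GL n (ZMod p)`. -/
theorem reduction_kernel_pGroup (p n m : ℕ) (hp : p.Prime) (hm : 1 ≤ m) :
    IsPGroup p
      (Matrix.GeneralLinearGroup.map
        (ZMod.castHom (dvd_pow_self p (by omega : m ≠ 0)) (ZMod p)) :
          GL (Fin n) (ZMod (p ^ m)) →* GL (Fin n) (ZMod p)).ker ∧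
    ∃ hN : (pCore p (GL (Fin n) (ZMod (p ^ m)))).Normal,
      letI := hN
      Nonempty ((GL (Fin n) (ZMod (p ^ m)) ⧸ pCore p (GL (Fin n) (ZMod (p ^ m)))) ≃*
        GL (Fin n) (ZMod p)) := by
  obtain ⟨k, rfl⟩ := Nat.exists_eq_add_of_le' hm
  have := Fact.mk hp
  have := ZMod.isLocalHom_castHom_pow p k.add_one_ne_zero
  set f : GL (Fin n) (ZMod (p ^ (k + 1))) →* GL (Fin n) (ZMod p) :=
    GeneralLinearGroup.map (ZMod.castHom (dvd_pow_self p k.add_one_ne_zero) (ZMod p))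
  have hker : IsPGroup p f.ker := fun A =>
    ⟨k, Subtype.ext (GeneralLinearGroup.pow_eq_one_of_mem_ker_map_castHom A.2)⟩
  have hf : Function.Surjective f :=
    GeneralLinearGroup.map_surjective _ (ZMod.ringHom_surjective _)
  have hcore : pCore p _ = f.ker :=
    pCore_eq_ker f hf hker fun N _ hN => GeneralLinearGroup.eq_bot_of_normal_of_isPGroup N hN
  have hN : (pCore p (GL (Fin n) (ZMod (p ^ (k + 1))))).Normal :=
    Subgroup.sSup_normal _ fun _ hH => hH.1
  refine ⟨hker, hN, ?_⟩
  exact ⟨(QuotientGroup.quotientMulEquivOfEq hcore).trans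
    (QuotientGroup.quotientKerEquivOfSurjective f hf)⟩
end
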